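/- Let T ≥ 1, let X_1,…,X_T and Y_1,…,Y_T be finite nonempty types, let P_t : X_t → ℝ≥0 and Q_t : Y_t → ℝ≥0 be probability vectors, let w_t ≥ 0 be weights and d_t : X_t×Y_t → ℝ≥0 stage costs. Define the product probability vectors P(ξ) := ∏_{t=1}^T P_t(ξ_t) on X := X_1×⋯×X_T and Q(ζ) := ∏_{t=1}^T Q_t(ζ_t) on Y := Y_1×⋯×Y_T, and the separable cost d(ξ,ζ) := Σ_{t=1}^T w_t·d_t(ξ_t,ζ_t). Then d_W(P, Q; d) = Σ_{t=1}^T w_t·d_W(P_t, Q_t; d_t). -/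

import Mathlib

open scoped NNReal Classical
open Finset

noncomputable section

/-- A full path of a `T`-stage scenario tree with stage types `X 0, …, X (T-1)`
(0-indexed: index `t` corresponds to stage `t+1` of the paper). -/
abbrev NDPath (X : ℕ → Type) (T : ℕ) := ∀ t : Fin T, X t.1

/-- A stage-`t` prefix (the history of the first `t` stages); `t = 0` is the root. -/
abbrev NDPre (X : ℕ → Type) (t : ℕ) := ∀ τ : Fin t, X τ.1

/-- The path `i` extends the stage-`t` prefix `k`. -/
def NDExtends {X : ℕ → Type} {T t : ℕ} (i : NDPath X T) (k : NDPre X t) : Prop :=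
  ∀ (τ : Fin t) (h : τ.1 < T), i ⟨τ.1, h⟩ = k τ

/-- The subtree weight `π_{k,l}` of a transport plan `π` on path pairs:
the total mass of `π` on path pairs extending the prefix pair `(k, l)`. -/
def NDsubw {X Y : ℕ → Type} {T : ℕ} [∀ n, Fintype (X n)] [∀ n, Fintype (Y n)]
    (π : NDPath X T → NDPath Y T → ℝ≥0) (t : ℕ) (k : NDPre X t) (l : NDPre Y t) : ℝ≥0 :=
  ∑ i : NDPath X T, ∑ j : NDPath Y T,
    if NDExtends i k ∧ NDExtends j l then π i j else 0

/-- The nested distance LP value: minimum of `∑ π(i,j) d(i,j)` over transport plans of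
total mass one satisfying the successor-form conditional marginal constraints. -/
def NDval {X Y : ℕ → Type} (T : ℕ) [∀ n, Fintype (X n)] [∀ n, Fintype (Y n)]
    (p : ∀ t, NDPre X t → X t → ℝ≥0) (q : ∀ t, NDPre Y t → Y t → ℝ≥0)
    (d : NDPath X T → NDPath Y T → ℝ≥0) : ℝ≥0 :=
  sInf { v | ∃ π : NDPath X T → NDPath Y T → ℝ≥0,
    (∑ i, ∑ j, π i j) = 1 ∧
    (∀ t, t < T → ∀ (k : NDPre X t) (l : NDPre Y t) (x : X t) (y : Y t),
      (∑ y' : Y t, NDsubw π (t+1) (Fin.snoc k x) (Fin.snoc l y'))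
          = p t k x * NDsubw π t k l ∧
      (∑ x' : X t, NDsubw π (t+1) (Fin.snoc k x') (Fin.snoc l y))
          = q t l y * NDsubw π t k l) ∧
    v = ∑ i, ∑ j, π i j * d i j }

/-- The sub-tree distance `D_t(k,l)`, defined by backward recursion: at `t = T` it is the
path cost, and for `t < T` it is the optimal value of the stage-`t` transport subproblem. -/
def NDsub {X Y : ℕ → Type} (T : ℕ) [∀ n, Fintype (X n)] [∀ n, Fintype (Y n)]
    (p : ∀ t, NDPre X t → X t → ℝ≥0) (q : ∀ t, NDPre Y t → Y t → ℝ≥0)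
    (d : NDPath X T → NDPath Y T → ℝ≥0)
    (t : ℕ) (k : NDPre X t) (l : NDPre Y t) : ℝ≥0 :=
  if h : t < T then
    sInf { v | ∃ π : X t → Y t → ℝ≥0,
      (∀ x, ∑ y, π x y = p t k x) ∧ (∀ y, ∑ x, π x y = q t l y) ∧
      v = ∑ x, ∑ y, π x y * NDsub T p q d (t+1) (Fin.snoc k x) (Fin.snoc l y) }
  else
    d (fun τ => k ⟨τ.1, lt_of_lt_of_le τ.2 (not_lt.mp h)⟩)
      (fun τ => l ⟨τ.1, lt_of_lt_of_le τ.2 (not_lt.mp h)⟩)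
  termination_by T - t
  decreasing_by omega

/-- The dynamic-programming value function `Φ_t(k,l,m)` with mass argument `m`. -/
def NDPhi {X Y : ℕ → Type} (T : ℕ) [∀ n, Fintype (X n)] [∀ n, Fintype (Y n)]
    (p : ∀ t, NDPre X t → X t → ℝ≥0) (q : ∀ t, NDPre Y t → Y t → ℝ≥0)
    (d : NDPath X T → NDPath Y T → ℝ≥0)
    (t : ℕ) (k : NDPre X t) (l : NDPre Y t) (m : ℝ≥0) : ℝ≥0 :=
  if h : t < T then
    sInf { v | ∃ π : X t → Y t → ℝ≥0,
      (∀ x, ∑ y, π x y = p t k x * m) ∧ (∀ y, ∑ x, π x y = q t l y * m) ∧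
      v = ∑ x, ∑ y, NDPhi T p q d (t+1) (Fin.snoc k x) (Fin.snoc l y) (π x y) }
  else
    m * d (fun τ => k ⟨τ.1, lt_of_lt_of_le τ.2 (not_lt.mp h)⟩)
          (fun τ => l ⟨τ.1, lt_of_lt_of_le τ.2 (not_lt.mp h)⟩)
  termination_by T - t
  decreasing_by omega

/-- The Wasserstein (optimal transport) value between two probability vectors for a cost `c`. -/
def dW {A B : Type*} [Fintype A] [Fintype B]
    (P : A → ℝ≥0) (Q : B → ℝ≥0) (c : A → B → ℝ≥0) : ℝ≥0 :=
  sInf { v | ∃ π : A → B → ℝ≥0,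
    (∀ a, ∑ b, π a b = P a) ∧ (∀ b, ∑ a, π a b = Q b) ∧
    v = ∑ a, ∑ b, π a b * c a b }

/-- The conditional probability `P(i ∣ k)` of the path `i` given its stage-`t` prefix:
the product of the conditional probabilities of the steps of `i` after stage `t`.
With `t = 0` this is the (unconditional) path probability `P(i)`. -/
def NDcondP {X : ℕ → Type} {T : ℕ} (p : ∀ t, NDPre X t → X t → ℝ≥0)
    (t : ℕ) (i : NDPath X T) : ℝ≥0 :=
  ∏ τ ∈ Finset.Ico t T,
    if h : τ < T then p τ (fun s => i ⟨s.1, lt_trans s.2 h⟩) (i ⟨τ, h⟩) else 1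

end

/-! The product of stagewise optimal plans couples the two product vectors, and by separability
its cost is `∑ t, w t * dW (P t) (Q t) (dstage t)`; optimal plans exist since the couplings of
two vectors form a compact set. Conversely, the `t`-th marginal of any coupling of the products
is a coupling of `P t` and `Q t` that carries the `t`-th summand of the separable cost, so that
summand is at least `w t * dW (P t) (Q t) (dstage t)`. -/

section Coupling

variable {A B : Type*} [Fintype A] [Fintype B]

def IsCoupling {M : Type*} [AddCommMonoid M] (P : A → M) (Q : B → M) (π : A → B → M) : Prop :=
  (∀ a, ∑ b, π a b = P a) ∧ (∀ b, ∑ a, π a b = Q b)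

def transportCost (π c : A → B → ℝ≥0) : ℝ≥0 :=
  ∑ a, ∑ b, π a b * c a b

theorem isCoupling_mul {R : Type*} [CommSemiring R] {P : A → R} {Q : B → R}
    (hP : ∑ a, P a = 1) (hQ : ∑ b, Q b = 1) : IsCoupling P Q fun a b => P a * Q b :=
  ⟨fun a => by rw [← mul_sum, hQ, mul_one], fun b => by rw [← sum_mul, hP, one_mul]⟩

theorem IsCoupling.map {M : Type*} [AddCommMonoid M] {A' B' : Type*} [Fintype A'] [Fintype B']
    [DecidableEq A'] [DecidableEq B'] {P : A → M} {Q : B → M} {π : A → B → M}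
    (h : IsCoupling P Q π) (f : A → A') (g : B → B') :
    IsCoupling (fun a' => ∑ a with f a = a', P a) (fun b' => ∑ b with g b = b', Q b)
      (fun a' b' => ∑ a with f a = a', ∑ b with g b = b', π a b) := by
  constructor
  · intro a'
    rw [sum_comm]
    exact sum_congr rfl fun a _ => by rw [sum_fiberwise, h.1]
  · intro b'
    rw [sum_fiberwise, sum_comm]
    exact sum_congr rfl fun b _ => h.2 b

theorem transportCost_map {A' B' : Type*} [Fintype A'] [Fintype B'] [DecidableEq A']
    [DecidableEq B'] (π : A → B → ℝ≥0) (f : A → A') (g : B → B') (c : A' → B' → ℝ≥0) :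
    transportCost (fun a' b' => ∑ a with f a = a', ∑ b with g b = b', π a b) c
      = transportCost π fun a b => c (f a) (g b) := by
  calc ∑ a', ∑ b', (∑ a with f a = a', ∑ b with g b = b', π a b) * c a' b'
      = ∑ a', ∑ b', ∑ a with f a = a', ∑ b with g b = b', π a b * c (f a) (g b) := by
        refine sum_congr rfl fun a' _ => sum_congr rfl fun b' _ => ?_
        simp only [sum_mul]
        refine sum_congr rfl fun a ha => sum_congr rfl fun b hb => ?_
        rw [(mem_filter.1 ha).2, (mem_filter.1 hb).2]
    _ = ∑ a', ∑ a with f a = a', ∑ b', ∑ b with g b = b', π a b * c (f a) (g b) :=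
        sum_congr rfl fun _ _ => sum_comm
    _ = ∑ a, ∑ b, π a b * c (f a) (g b) := by simp only [sum_fiberwise]

theorem transportCost_sum_mul {ι : Type*} (s : Finset ι) (π : A → B → ℝ≥0) (w : ι → ℝ≥0)
    (c : ι → A → B → ℝ≥0) :
    transportCost π (fun a b => ∑ t ∈ s, w t * c t a b)
      = ∑ t ∈ s, w t * transportCost π (c t) := by
  simp only [transportCost, mul_sum, sum_comm (s := s), mul_left_comm]

theorem dW_le_transportCost {P : A → ℝ≥0} {Q : B → ℝ≥0} {π : A → B → ℝ≥0}
    (h : IsCoupling P Q π) (c : A → B → ℝ≥0) : dW P Q c ≤ transportCost π c :=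
  csInf_le (OrderBot.bddBelow _) ⟨π, h.1, h.2, rfl⟩

theorem le_dW {P : A → ℝ≥0} {Q : B → ℝ≥0} {c : A → B → ℝ≥0} {v : ℝ≥0}
    (hne : ∃ π, IsCoupling P Q π) (h : ∀ π, IsCoupling P Q π → v ≤ transportCost π c) :
    v ≤ dW P Q c := by
  obtain ⟨π, hπ⟩ := hne
  exact le_csInf ⟨_, π, hπ.1, hπ.2, rfl⟩ fun _ ⟨π, h₁, h₂, hv⟩ => hv ▸ h π ⟨h₁, h₂⟩

theorem dW_map_le_transportCost {A' B' : Type*} [Fintype A'] [Fintype B']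
    [DecidableEq A'] [DecidableEq B'] {P : A → ℝ≥0} {Q : B → ℝ≥0}
    {π : A → B → ℝ≥0} (h : IsCoupling P Q π) (f : A → A') (g : B → B') (c : A' → B' → ℝ≥0) :
    dW (fun a' => ∑ a with f a = a', P a) (fun b' => ∑ b with g b = b', Q b) c
      ≤ transportCost π fun a b => c (f a) (g b) :=
  transportCost_map π f g c ▸ dW_le_transportCost (h.map f g) c

theorem isCompact_setOf_isCoupling (P : A → ℝ≥0) (Q : B → ℝ≥0) :
    IsCompact {π | IsCoupling P Q π} := by
  refine (isCompact_univ_pi fun a => isCompact_univ_pi fun _ =>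
    isCompact_Icc (a := 0) (b := P a)).of_isClosed_subset ?_ ?_
  · simp only [IsCoupling, Set.ofPred_and, Set.ofPred_forall]
    exact (isClosed_iInter fun a => isClosed_eq (by fun_prop) continuous_const).inter
      (isClosed_iInter fun b => isClosed_eq (by fun_prop) continuous_const)
  · intro π hπ a _ b _
    exact ⟨zero_le, hπ.1 a ▸ single_le_sum (fun _ _ => zero_le) (mem_univ b)⟩

theorem exists_isCoupling_transportCost_eq_dW {P : A → ℝ≥0} {Q : B → ℝ≥0}
    (hne : ∃ π, IsCoupling P Q π) (c : A → B → ℝ≥0) :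
    ∃ π, IsCoupling P Q π ∧ transportCost π c = dW P Q c := by
  have hcompact : IsCompact ((transportCost · c) '' {π | IsCoupling P Q π}) :=
    (isCompact_setOf_isCoupling P Q).image (by unfold transportCost; fun_prop)
  obtain ⟨π, hπ, hv⟩ := hcompact.sInf_mem (Set.Nonempty.image _ hne)
  refine ⟨π, hπ, hv.trans (congrArg sInf ?_)⟩
  ext v
  exact ⟨fun ⟨π, hπ, hv⟩ => ⟨π, hπ.1, hπ.2, hv.symm⟩,
    fun ⟨π, h₁, h₂, hv⟩ => ⟨π, ⟨h₁, h₂⟩, hv.symm⟩⟩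

end Coupling

section Product

variable {ι : Type*} [Fintype ι] [DecidableEq ι]

theorem sum_prod_of_apply_eq {R : Type*} [CommSemiring R] {κ : ι → Type*}
    [∀ s, Fintype (κ s)] [∀ s, DecidableEq (κ s)] (f : ∀ s, κ s → R) {t : ι}
    (hf : ∀ s ≠ t, ∑ z, f s z = 1) (x : κ t) :
    ∑ k : (∀ s, κ s) with k t = x, ∏ s, f s (k s) = f t x := by
  have hfiber : univ.filter (fun k : ∀ s, κ s => k t = x)
      = Fintype.piFinset (Function.update (fun s => (univ : Finset (κ s))) t {x}) := by
    rw [Fintype.piFinset_update_singleton_eq_filter_piFinset_eq _ t (mem_univ x),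
      Fintype.piFinset_univ]
  rw [hfiber, ← prod_univ_sum, Fintype.prod_eq_single t fun s hs => by
      rw [Function.update_of_ne hs, hf s hs]]
  simp

theorem IsCoupling.pi {R : Type*} [CommSemiring R] {X Y : ι → Type*} [∀ s, Fintype (X s)]
    [∀ s, Fintype (Y s)] {P : ∀ s, X s → R} {Q : ∀ s, Y s → R} {π : ∀ s, X s → Y s → R}
    (h : ∀ s, IsCoupling (P s) (Q s) (π s)) :
    IsCoupling (fun i : ∀ s, X s => ∏ s, P s (i s)) (fun j : ∀ s, Y s => ∏ s, Q s (j s))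
      (fun i j => ∏ s, π s (i s) (j s)) :=
  ⟨fun i => (Fintype.prod_sum fun s y => π s (i s) y).symm.trans
      (prod_congr rfl fun s _ => (h s).1 _),
    fun j => (Fintype.prod_sum fun s x => π s x (j s)).symm.trans
      (prod_congr rfl fun s _ => (h s).2 _)⟩

theorem IsCoupling.sum_pi_of_apply_eq {X Y : ι → Type*} [∀ s, Fintype (X s)]
    [∀ s, Fintype (Y s)] [∀ s, DecidableEq (X s)] [∀ s, DecidableEq (Y s)] {R : Type*}
    [CommSemiring R] {P : ∀ s, X s → R} {Q : ∀ s, Y s → R} {π : ∀ s, X s → Y s → R}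
    (h : ∀ s, IsCoupling (P s) (Q s) (π s)) {t : ι} (hP : ∀ s ≠ t, ∑ x, P s x = 1)
    (x : X t) (y : Y t) :
    ∑ i : (∀ s, X s) with i t = x, ∑ j : (∀ s, Y s) with j t = y, ∏ s, π s (i s) (j s)
      = π t x y := by
  have hpairs : ∑ i : (∀ s, X s) with i t = x, ∑ j : (∀ s, Y s) with j t = y,
        ∏ s, π s (i s) (j s)
      = ∑ k : (∀ s, X s × Y s) with k t = (x, y), ∏ s, π s (k s).1 (k s).2 := by
    rw [← sum_product']
    exact sum_equiv (Equiv.arrowProdEquivProdArrow ι X Y).symm (by simp [Prod.ext_iff])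
      (by simp)
  rw [hpairs]
  refine sum_prod_of_apply_eq (κ := fun s => X s × Y s) (fun s z => π s z.1 z.2)
    (fun s hs => ?_) (x, y)
  rw [Fintype.sum_prod_type, ← hP s hs]
  exact sum_congr rfl fun x _ => (h s).1 x

theorem transportCost_pi_apply {X Y : ι → Type*} [∀ s, Fintype (X s)] [∀ s, Fintype (Y s)]
    {P : ∀ s, X s → ℝ≥0} {Q : ∀ s, Y s → ℝ≥0} {π : ∀ s, X s → Y s → ℝ≥0}
    (h : ∀ s, IsCoupling (P s) (Q s) (π s)) {t : ι} (hP : ∀ s ≠ t, ∑ x, P s x = 1)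
    (c : X t → Y t → ℝ≥0) :
    transportCost (fun (i : ∀ s, X s) (j : ∀ s, Y s) => ∏ s, π s (i s) (j s))
        (fun i j => c (i t) (j t))
      = transportCost (π t) c := by
  classical
  rw [← transportCost_map _ (fun i : ∀ s, X s => i t) (fun j : ∀ s, Y s => j t) c]
  exact congrArg (transportCost · c) (funext₂ (IsCoupling.sum_pi_of_apply_eq h hP))

theorem dW_le_transportCost_apply {X Y : ι → Type*} [∀ s, Fintype (X s)] [∀ s, Fintype (Y s)]
    {P : ∀ s, X s → ℝ≥0} {Q : ∀ s, Y s → ℝ≥0} {π : (∀ s, X s) → (∀ s, Y s) → ℝ≥0}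
    (h : IsCoupling (fun i => ∏ s, P s (i s)) (fun j => ∏ s, Q s (j s)) π) {t : ι}
    (hP : ∀ s ≠ t, ∑ x, P s x = 1) (hQ : ∀ s ≠ t, ∑ y, Q s y = 1) (c : X t → Y t → ℝ≥0) :
    dW (P t) (Q t) c ≤ transportCost π fun i j => c (i t) (j t) := by
  classical
  simpa only [sum_prod_of_apply_eq P hP, sum_prod_of_apply_eq Q hQ] using
    dW_map_le_transportCost h (fun i => i t) (fun j => j t) c

end Product

theorem dW_product_separable_cost_general
    (T : ℕ) (X Y : ℕ → Type)
    [∀ n, Fintype (X n)]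
    [∀ n, Fintype (Y n)]
    (P : ∀ n, X n → ℝ≥0) (Q : ∀ n, Y n → ℝ≥0)
    (hP : ∀ t, t < T → ∑ x, P t x = 1) (hQ : ∀ t, t < T → ∑ y, Q t y = 1)
    (w : ℕ → ℝ≥0) (dstage : ∀ n, X n → Y n → ℝ≥0) :
    dW (fun i : NDPath X T => ∏ t : Fin T, P t.1 (i t))
        (fun j : NDPath Y T => ∏ t : Fin T, Q t.1 (j t))
        (fun i j => ∑ t : Fin T, w t.1 * dstage t.1 (i t) (j t))
      = ∑ t : Fin T, w t.1 * dW (P t.1) (Q t.1) (dstage t.1) := by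
  have hP' (t : Fin T) : ∑ x, P t x = 1 := hP t t.2
  have hQ' (t : Fin T) : ∑ y, Q t y = 1 := hQ t t.2
  have hind (t : Fin T) : IsCoupling (P t) (Q t) fun x y => P t x * Q t y :=
    isCoupling_mul (hP' t) (hQ' t)
  apply le_antisymm
  · choose π hπ hcost using fun t : Fin T =>
      exists_isCoupling_transportCost_eq_dW ⟨_, hind t⟩ (dstage t)
    calc _ ≤ transportCost (fun (i : NDPath X T) (j : NDPath Y T) => ∏ t, π t (i t) (j t))
          (fun i j => ∑ t : Fin T, w t * dstage t (i t) (j t)) :=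
          dW_le_transportCost (IsCoupling.pi hπ) _
      _ = ∑ t : Fin T, w t * transportCost (π t) (dstage t) := by
          rw [transportCost_sum_mul]
          exact sum_congr rfl fun t _ => by rw [transportCost_pi_apply hπ fun s _ => hP' s]
      _ = _ := by simp only [hcost]
  · refine le_dW ⟨_, IsCoupling.pi hind⟩ fun π hπ => ?_
    rw [transportCost_sum_mul]
    gcongr with t
    exact dW_le_transportCost_apply hπ (fun s _ => hP' s) (fun s _ => hQ' s) (dstage t)

/-- The Wasserstein value between the product measures of the stagewise
marginals, with a separable cost, equals the weighted sum of the stagewise Wasserstein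
values. -/
theorem dW_product_separable_cost
    (T : ℕ) (hT : 1 ≤ T) (X Y : ℕ → Type)
    [∀ n, Fintype (X n)] [∀ n, Nonempty (X n)]
    [∀ n, Fintype (Y n)] [∀ n, Nonempty (Y n)]
    (P : ∀ n, X n → ℝ≥0) (Q : ∀ n, Y n → ℝ≥0)
    (hP : ∀ t, t < T → ∑ x, P t x = 1) (hQ : ∀ t, t < T → ∑ y, Q t y = 1)
    (w : ℕ → ℝ≥0) (dstage : ∀ n, X n → Y n → ℝ≥0) :
    dW (fun i : NDPath X T => ∏ t : Fin T, P t.1 (i t))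
        (fun j : NDPath Y T => ∏ t : Fin T, Q t.1 (j t))
        (fun i j => ∑ t : Fin T, w t.1 * dstage t.1 (i t) (j t))
      = ∑ t : Fin T, w t.1 * dW (P t.1) (Q t.1) (dstage t.1) :=
  dW_product_separable_cost_general T X Y P Q hP hQ w dstage
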